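/- The Z[q,q^{-1}]-algebra Ĥ_{r,n} is isomorphic to the algebra Ê_{r,n}, which is the direct sum over dominant orbit representatives λ ∈ 𝔰'_n of the n_λ × n_λ matrix algebras Mat_{n_λ}(1_λ Ĥ_{r,n} 1_λ), where n_λ = |S_n · λ|. The isomorphism Ψ: Ĥ_{r,n} → Ê_{r,n} sends h to the matrix whose (λ₁, λ₂)-entry (for λ₁, λ₂ in the same S_n-orbit) is τ_{λ₁} 1_{λ₁} h 1_{λ₂} τ'_{λ₂}, and its inverse Φ sends a matrix (x_{λ₁,λ₂}) to Σ τ'_{λ₁} 1_{λ₁⁰} x_{λ₁,λ₂} 1_{λ₂⁰} τ_{λ₂}. -/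
import Mathlib


/-!
STATEMENT 13: The `ℤ[q,q⁻¹]`-algebra `Ĥ_{r,n}` is isomorphic to the algebra `Ê_{r,n}`,
the direct sum over dominant orbit representatives `λ ∈ 𝔰'_n` of the matrix algebras
`Mat_{n_λ}(1_λ Ĥ_{r,n} 1_λ)`, `n_λ = |S_n·λ|`.  Concretely, `Ê_{r,n}` consists of the
"matrices" `x = (x_{λ₁,λ₂})` indexed by pairs of tuples in a common `S_n`-orbit, with
entries `x_{λ₁,λ₂} ∈ 1_{λ₁⁰} Ĥ_{r,n} 1_{λ₂⁰}` and matrix-style product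
`(xy)_{λ₁,λ₂} = Σ_{λ̃ ∈ S_nλ₁} x_{λ₁,λ̃} y_{λ̃,λ₂}`.  The isomorphism
`Ψ : Ĥ_{r,n} → Ê_{r,n}` is `Ψ(h)_{λ₁,λ₂} = τ_{λ₁} 1_{λ₁} h 1_{λ₂} τ'_{λ₂}`, with inverse
`Φ(x) = Σ τ'_{λ₁} 1_{λ₁⁰} x_{λ₁,λ₂} 1_{λ₂⁰} τ_{λ₂}`.

Setup: `Ĥ_{r,n}` over `𝒜 = ℤ[q,q⁻¹] = LaurentPolynomial ℤ` as in Statement 8; `dom λ`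
denotes the dominant (monotone) representative `λ⁰` of the orbit of `λ`, and `τ_λ, τ'_λ`
are the products of the `g_{s_i}` along a chain of simple reflections carrying `λ` to
`λ⁰` (as in Statement 12).  The theorem asserts: `Ψ` is `𝒜`-linear, unital and
multiplicative for the matrix-style product, takes values in `Ê_{r,n}`, and `Φ` is a
two-sided inverse; hence `Ĥ_{r,n} ≅ Ê_{r,n}`.
-/

open scoped Classical

/-- The ground ring `𝒜 = ℤ[q,q⁻¹]`. -/
abbrev LA : Type := LaurentPolynomial ℤ

noncomputable abbrev qq : LA := LaurentPolynomial.T 1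
noncomputable abbrev qqinv : LA := LaurentPolynomial.T (-1)

section

variable (r n : ℕ)

inductive HhatGen (r n : ℕ) : Type
  | g : Fin (n - 1) → HhatGen r n
  | e : (Fin n → Fin r) → HhatGen r n
  | x : HhatGen r n
  | xinv : HhatGen r n

def Hlo {n : ℕ} (i : Fin (n - 1)) : Fin n := ⟨i.val, by omega⟩
def Hhi {n : ℕ} (i : Fin (n - 1)) : Fin n := ⟨i.val + 1, by omega⟩
def Hswap {n : ℕ} (i : Fin (n - 1)) : Equiv.Perm (Fin n) := Equiv.swap (Hlo i) (Hhi i)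

open FreeAlgebra in
inductive HhatRel : FreeAlgebra LA (HhatGen r n) → FreeAlgebra LA (HhatGen r n) → Prop
  | gg (i j : Fin (n - 1)) (hij : i.val + 2 ≤ j.val ∨ j.val + 2 ≤ i.val) :
      HhatRel (ι LA (HhatGen.g i) * ι LA (HhatGen.g j)) (ι LA (HhatGen.g j) * ι LA (HhatGen.g i))
  | braid (i j : Fin (n - 1)) (hij : j.val = i.val + 1) :
      HhatRel (ι LA (HhatGen.g i) * ι LA (HhatGen.g j) * ι LA (HhatGen.g i))
        (ι LA (HhatGen.g j) * ι LA (HhatGen.g i) * ι LA (HhatGen.g j))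
  | ge (i : Fin (n - 1)) (lam : Fin n → Fin r) :
      HhatRel (ι LA (HhatGen.g i) * ι LA (HhatGen.e lam))
        (ι LA (HhatGen.e (lam ∘ (Hswap i))) * ι LA (HhatGen.g i))
  | sum_e : HhatRel (∑ lam : Fin n → Fin r, ι LA (HhatGen.e lam)) 1
  | orth (lam lam' : Fin n → Fin r) :
      HhatRel (ι LA (HhatGen.e lam) * ι LA (HhatGen.e lam'))
        (if lam = lam' then ι LA (HhatGen.e lam) else 0)
  | quad (i : Fin (n - 1)) :
      HhatRel (ι LA (HhatGen.g i) ^ 2)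
        (1 + (qq - qqinv) •
          ∑ lam ∈ Finset.univ.filter (fun lam : Fin n → Fin r => lam ∘ (Hswap i) = lam),
            ι LA (HhatGen.g i) * ι LA (HhatGen.e lam))
  | x_xinv : HhatRel (ι LA (HhatGen.x (r := r) (n := n)) * ι LA HhatGen.xinv) 1
  | xinv_x : HhatRel (ι LA (HhatGen.xinv (r := r) (n := n)) * ι LA HhatGen.x) 1
  | gxgx (i : Fin (n - 1)) (hi : i.val = 0) :
      HhatRel (ι LA (HhatGen.g i) * ι LA HhatGen.x * ι LA (HhatGen.g i) * ι LA HhatGen.x)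
        (ι LA HhatGen.x * ι LA (HhatGen.g i) * ι LA HhatGen.x * ι LA (HhatGen.g i))
  | gx (i : Fin (n - 1)) (hi : 1 ≤ i.val) :
      HhatRel (ι LA (HhatGen.g i) * ι LA HhatGen.x) (ι LA HhatGen.x * ι LA (HhatGen.g i))
  | xe (lam : Fin n → Fin r) :
      HhatRel (ι LA HhatGen.x * ι LA (HhatGen.e lam)) (ι LA (HhatGen.e lam) * ι LA HhatGen.x)

noncomputable abbrev HhatYH := RingQuot (HhatRel r n)

noncomputable def Hg (i : Fin (n - 1)) : HhatYH r n :=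
  RingQuot.mkAlgHom LA _ (FreeAlgebra.ι LA (HhatGen.g i))

noncomputable def He (lam : Fin n → Fin r) : HhatYH r n :=
  RingQuot.mkAlgHom LA _ (FreeAlgebra.ι LA (HhatGen.e lam))

/-- `applyChain [s_1,…,s_k] λ = s_1 s_2 ⋯ s_k λ`. -/
def applyChain {r n : ℕ} : List (Fin (n - 1)) → (Fin n → Fin r) → (Fin n → Fin r)
  | [], lam => lam
  | i :: t, lam => (applyChain t lam) ∘ (Hswap i)

/-- Two tuples lie in the same `S_n`-orbit. -/
def sameOrbit {r n : ℕ} (l1 l2 : Fin n → Fin r) : Prop :=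
  ∃ σ : Equiv.Perm (Fin n), l2 = l1 ∘ σ

/-- `τ_λ = g_{s_1} ⋯ g_{s_k}`. -/
noncomputable def tauP (chains : (Fin n → Fin r) → List (Fin (n - 1)))
    (lam : Fin n → Fin r) : HhatYH r n :=
  ((chains lam).map (Hg r n)).prod

/-- `τ'_λ = g_{s_k} ⋯ g_{s_1}`. -/
noncomputable def tauP' (chains : (Fin n → Fin r) → List (Fin (n - 1)))
    (lam : Fin n → Fin r) : HhatYH r n :=
  ((chains lam).reverse.map (Hg r n)).prod

/-- The map `Ψ : Ĥ_{r,n} → Ê_{r,n}`, `Ψ(h)_{λ₁,λ₂} = τ_{λ₁} 1_{λ₁} h 1_{λ₂} τ'_{λ₂}`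
(and `0` if `λ₁, λ₂` are not in the same orbit). -/
noncomputable def ΨM (chains : (Fin n → Fin r) → List (Fin (n - 1))) (h : HhatYH r n)
    (l1 l2 : Fin n → Fin r) : HhatYH r n :=
  if sameOrbit l1 l2 then
    tauP r n chains l1 * He r n l1 * h * He r n l2 * tauP' r n chains l2
  else 0

/-- The map `Φ : Ê_{r,n} → Ĥ_{r,n}`,
`Φ(x) = Σ_{(λ₁,λ₂)} τ'_{λ₁} 1_{λ₁⁰} x_{λ₁,λ₂} 1_{λ₂⁰} τ_{λ₂}`. -/
noncomputable def ΦM (chains : (Fin n → Fin r) → List (Fin (n - 1)))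
    (dom : (Fin n → Fin r) → (Fin n → Fin r))
    (x : (Fin n → Fin r) → (Fin n → Fin r) → HhatYH r n) : HhatYH r n :=
  ∑ l1 : Fin n → Fin r, ∑ l2 : Fin n → Fin r,
    if sameOrbit l1 l2 then
      tauP' r n chains l1 * He r n (dom l1) * x l1 l2 * He r n (dom l2) * tauP r n chains l2
    else 0

end

namespace Stmt13

variable {r n : ℕ}

theorem rel_eq {a b : FreeAlgebra LA (HhatGen r n)} (h : HhatRel r n a b) :
    RingQuot.mkAlgHom LA (HhatRel r n) a = RingQuot.mkAlgHom LA (HhatRel r n) b :=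
  RingQuot.mkAlgHom_rel LA h

theorem He_mul_He (l l' : Fin n → Fin r) :
    He r n l * He r n l' = if l = l' then He r n l else 0 := by
  unfold He
  rw [← map_mul, rel_eq (HhatRel.orth l l')]
  split_ifs <;> simp

theorem sum_He : (∑ l : Fin n → Fin r, He r n l) = 1 := by
  unfold He
  rw [← map_sum, rel_eq (HhatRel.sum_e), map_one]

theorem g_mul_He (i : Fin (n - 1)) (lam : Fin n → Fin r) :
    Hg r n i * He r n lam = He r n (lam ∘ Hswap i) * Hg r n i := by
  unfold Hg He
  rw [← map_mul, rel_eq (HhatRel.ge i lam), map_mul]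

theorem comp_swap_swap (lam : Fin n → Fin r) (i : Fin (n - 1)) :
    (lam ∘ Hswap i) ∘ Hswap i = lam := by
  funext x; simp [Hswap, Function.comp, Equiv.swap_apply_self]

theorem He_mul_g (lam : Fin n → Fin r) (i : Fin (n - 1)) :
    He r n lam * Hg r n i = Hg r n i * He r n (lam ∘ Hswap i) := by
  rw [g_mul_He i (lam ∘ Hswap i), comp_swap_swap]

theorem g_sq (i : Fin (n - 1)) :
    Hg r n i * Hg r n i = 1 + (qq - qqinv) •
      ∑ lam ∈ Finset.univ.filter (fun lam : Fin n → Fin r => lam ∘ (Hswap i) = lam),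
        Hg r n i * He r n lam := by
  unfold Hg He
  rw [← map_mul, ← pow_two, rel_eq (HhatRel.quad i)]
  simp [map_sum]

theorem gg_mul_He (i : Fin (n - 1)) {lam : Fin n → Fin r} (h : lam ∘ Hswap i ≠ lam) :
    Hg r n i * Hg r n i * He r n lam = He r n lam := by
  rw [g_sq, add_mul, one_mul, smul_mul_assoc, Finset.sum_mul]
  have : ∀ mu ∈ Finset.univ.filter (fun mu : Fin n → Fin r => mu ∘ (Hswap i) = mu),
      Hg r n i * He r n mu * He r n lam = 0 := by
    intro mu hmu
    rw [Finset.mem_filter] at hmu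
    have : mu ≠ lam := fun e => h (e ▸ hmu.2)
    rw [mul_assoc, He_mul_He, if_neg this, mul_zero]
  rw [Finset.sum_congr rfl this, Finset.sum_const_zero, smul_zero, add_zero]

theorem He_mul_gg (i : Fin (n - 1)) {lam : Fin n → Fin r} (h : lam ∘ Hswap i ≠ lam) :
    He r n lam * Hg r n i * Hg r n i = He r n lam := by
  rw [He_mul_g, mul_assoc, He_mul_g, comp_swap_swap, ← mul_assoc, gg_mul_He i h]

end Stmt13
namespace Stmt13

variable {r n : ℕ}

noncomputable def pG (c : List (Fin (n - 1))) : HhatYH r n := (c.map (Hg r n)).prod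
noncomputable def pG' (c : List (Fin (n - 1))) : HhatYH r n := (c.reverse.map (Hg r n)).prod

theorem tauP_eq (chains : (Fin n → Fin r) → List (Fin (n - 1))) (lam : Fin n → Fin r) :
    tauP r n chains lam = pG (chains lam) := rfl

theorem tauP'_eq (chains : (Fin n → Fin r) → List (Fin (n - 1))) (lam : Fin n → Fin r) :
    tauP' r n chains lam = pG' (chains lam) := rfl

@[simp] theorem pG_nil : pG ([] : List (Fin (n - 1))) = (1 : HhatYH r n) := rfl
@[simp] theorem pG'_nil : pG' ([] : List (Fin (n - 1))) = (1 : HhatYH r n) := rfl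

theorem pG_cons (i : Fin (n - 1)) (t : List (Fin (n - 1))) :
    pG (r := r) (i :: t) = Hg r n i * pG t := by simp [pG]

theorem pG'_cons (i : Fin (n - 1)) (t : List (Fin (n - 1))) :
    pG' (r := r) (i :: t) = pG' t * Hg r n i := by simp [pG']

theorem pG_mul_He (c : List (Fin (n - 1))) (mu : Fin n → Fin r) :
    pG c * He r n mu = He r n (applyChain c mu) * pG c := by
  induction c with
  | nil => simp [applyChain]
  | cons i t ih =>
      rw [pG_cons, mul_assoc, ih, ← mul_assoc, g_mul_He, mul_assoc]
      rfl

theorem He_mul_pG' (c : List (Fin (n - 1))) (mu : Fin n → Fin r) :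
    He r n mu * pG' c = pG' c * He r n (applyChain c mu) := by
  induction c with
  | nil => simp [applyChain]
  | cons i t ih =>
      rw [pG'_cons, ← mul_assoc, ih, mul_assoc, He_mul_g, ← mul_assoc]
      rfl

theorem applyChain_inj (c : List (Fin (n - 1))) :
    Function.Injective (applyChain (r := r) c) := by
  induction c with
  | nil => exact fun a b h => h
  | cons i t ih =>
      intro a b h
      apply ih
      funext x
      have := congrFun h ((Hswap i) x)
      simpa [applyChain, Function.comp, Equiv.swap_apply_self, Hswap] using this

/-- Chain condition: each step changes the tuple. -/
def goodChain (c : List (Fin (n - 1))) (lam : Fin n → Fin r) : Prop :=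
  ∀ j < c.length, applyChain (c.drop j) lam ≠ applyChain (c.drop (j + 1)) lam

theorem goodChain_tail {i : Fin (n - 1)} {t : List (Fin (n - 1))} {lam : Fin n → Fin r}
    (h : goodChain (i :: t) lam) : goodChain t lam := by
  intro j hj
  have := h (j + 1) (by simpa using Nat.succ_lt_succ hj)
  simpa [List.drop] using this

theorem goodChain_head {i : Fin (n - 1)} {t : List (Fin (n - 1))} {lam : Fin n → Fin r}
    (h : goodChain (i :: t) lam) : applyChain (i :: t) lam ≠ applyChain t lam := by
  have := h 0 (by simp)
  simpa using this

theorem He_pG'_pG {c : List (Fin (n - 1))} {lam : Fin n → Fin r} (hc : goodChain c lam) :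
    He r n lam * pG' c * pG c = He r n lam := by
  induction c with
  | nil => simp
  | cons i t ih =>
      have hstep : applyChain t lam ∘ Hswap i ≠ applyChain t lam := goodChain_head hc
      rw [pG_cons, pG'_cons]
      simp only [← mul_assoc]
      rw [He_mul_pG', mul_assoc (pG' t) (He r n (applyChain t lam)), mul_assoc (pG' t),
        He_mul_gg i hstep, ← He_mul_pG', ih (goodChain_tail hc)]

theorem He0_pG_pG' {c : List (Fin (n - 1))} {lam : Fin n → Fin r} (hc : goodChain c lam) :
    He r n (applyChain c lam) * pG c * pG' c = He r n (applyChain c lam) := by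
  induction c with
  | nil => simp
  | cons i t ih =>
      have h1 : (applyChain (i :: t) lam) ∘ Hswap i = applyChain t lam :=
        comp_swap_swap _ i
      have hstep : (applyChain t lam ∘ Hswap i) ∘ Hswap i ≠ applyChain t lam ∘ Hswap i := by
        intro h
        rw [comp_swap_swap] at h
        exact goodChain_head hc h.symm
      rw [pG_cons, pG'_cons]
      simp only [← mul_assoc]
      rw [He_mul_g, h1, mul_assoc (Hg r n i) (He r n (applyChain t lam)) (pG t),
        mul_assoc (Hg r n i), ih (goodChain_tail hc), g_mul_He,
        He_mul_gg i hstep]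
      rfl

end Stmt13
namespace Stmt13

variable {r n : ℕ}

theorem sameOrbit_refl (l : Fin n → Fin r) : sameOrbit l l :=
  ⟨1, by funext x; rfl⟩

theorem sameOrbit_symm {l1 l2 : Fin n → Fin r} (h : sameOrbit l1 l2) : sameOrbit l2 l1 := by
  obtain ⟨σ, rfl⟩ := h
  exact ⟨σ⁻¹, by funext x; simp⟩

theorem sameOrbit_trans {l1 l2 l3 : Fin n → Fin r} (h : sameOrbit l1 l2)
    (h' : sameOrbit l2 l3) : sameOrbit l1 l3 := by
  obtain ⟨σ, rfl⟩ := h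
  obtain ⟨τ, rfl⟩ := h'
  exact ⟨σ * τ, by funext x; simp [Function.comp]⟩

theorem sameOrbit_swap (l : Fin n → Fin r) (i : Fin (n - 1)) :
    sameOrbit l (l ∘ Hswap i) := ⟨Hswap i, rfl⟩

theorem sameOrbit_applyChain (c : List (Fin (n - 1))) (l : Fin n → Fin r) :
    sameOrbit l (applyChain c l) := by
  induction c with
  | nil => exact sameOrbit_refl l
  | cons i t ih => exact sameOrbit_trans ih (sameOrbit_swap _ i)

/-- Sum of the `1_μ` over an orbit. -/
noncomputable def PO (l : Fin n → Fin r) : HhatYH r n :=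
  ∑ mu ∈ Finset.univ.filter (fun mu => sameOrbit l mu), He r n mu

theorem He_mul_PO_ite (l l1 : Fin n → Fin r) :
    He r n l1 * PO l = if sameOrbit l l1 then He r n l1 else 0 := by
  unfold PO
  rw [Finset.mul_sum]
  split_ifs with h
  · rw [Finset.sum_eq_single l1]
    · rw [He_mul_He, if_pos rfl]
    · intro b _ hb
      rw [He_mul_He, if_neg (Ne.symm hb)]
    · intro hl1
      exact absurd (Finset.mem_filter.2 ⟨Finset.mem_univ _, h⟩) hl1
  · apply Finset.sum_eq_zero
    intro b hb
    have hb' : l1 ≠ b := fun e => h (e ▸ (Finset.mem_filter.1 hb).2)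
    rw [He_mul_He, if_neg hb']

theorem He_mul_PO {l l1 : Fin n → Fin r} (h : sameOrbit l l1) :
    He r n l1 * PO l = He r n l1 := by
  rw [He_mul_PO_ite, if_pos h]

theorem x_mul_He (lam : Fin n → Fin r) :
    RingQuot.mkAlgHom LA (HhatRel r n) (FreeAlgebra.ι LA HhatGen.x) * He r n lam
      = He r n lam * RingQuot.mkAlgHom LA (HhatRel r n) (FreeAlgebra.ι LA HhatGen.x) := by
  unfold He
  rw [← map_mul, rel_eq (HhatRel.xe lam), map_mul]

theorem x_mul_xinv :
    RingQuot.mkAlgHom LA (HhatRel r n) (FreeAlgebra.ι LA HhatGen.x)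
      * RingQuot.mkAlgHom LA (HhatRel r n) (FreeAlgebra.ι LA HhatGen.xinv) = 1 := by
  rw [← map_mul, rel_eq (HhatRel.x_xinv), map_one]

theorem xinv_mul_x :
    RingQuot.mkAlgHom LA (HhatRel r n) (FreeAlgebra.ι LA HhatGen.xinv)
      * RingQuot.mkAlgHom LA (HhatRel r n) (FreeAlgebra.ι LA HhatGen.x) = 1 := by
  rw [← map_mul, rel_eq (HhatRel.xinv_x), map_one]

theorem xinv_mul_He (lam : Fin n → Fin r) :
    RingQuot.mkAlgHom LA (HhatRel r n) (FreeAlgebra.ι LA HhatGen.xinv) * He r n lam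
      = He r n lam * RingQuot.mkAlgHom LA (HhatRel r n) (FreeAlgebra.ι LA HhatGen.xinv) := by
  set X := RingQuot.mkAlgHom LA (HhatRel r n) (FreeAlgebra.ι LA (HhatGen.x (r := r) (n := n)))
  set Xi := RingQuot.mkAlgHom LA (HhatRel r n) (FreeAlgebra.ι LA (HhatGen.xinv (r := r) (n := n)))
  have h1 : Xi * He r n lam = Xi * He r n lam * (X * Xi) := by rw [x_mul_xinv, mul_one]
  rw [h1]
  rw [show Xi * He r n lam * (X * Xi) = Xi * (He r n lam * X) * Xi by simp only [mul_assoc]]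
  rw [← x_mul_He]
  rw [show Xi * (X * He r n lam) * Xi = (Xi * X) * (He r n lam * Xi) by simp only [mul_assoc]]
  rw [xinv_mul_x, one_mul]

theorem PO_mul_He (l l2 : Fin n → Fin r) :
    PO l * He r n l2 = if sameOrbit l l2 then He r n l2 else 0 := by
  unfold PO
  rw [Finset.sum_mul]
  split_ifs with h
  · rw [Finset.sum_eq_single l2]
    · rw [He_mul_He, if_pos rfl]
    · intro b _ hb
      rw [He_mul_He, if_neg hb]
    · intro hl2
      exact absurd (Finset.mem_filter.2 ⟨Finset.mem_univ _, h⟩) hl2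
  · apply Finset.sum_eq_zero
    intro b hb
    have hb' : b ≠ l2 := fun e => h (e ▸ (Finset.mem_filter.1 hb).2)
    rw [He_mul_He, if_neg hb']

theorem PO_comm_gen (l : Fin n → Fin r) (z : HhatGen r n) :
    PO l * RingQuot.mkAlgHom LA (HhatRel r n) (FreeAlgebra.ι LA z)
      = RingQuot.mkAlgHom LA (HhatRel r n) (FreeAlgebra.ι LA z) * PO l := by
  cases z with
  | g i =>
      show PO l * Hg r n i = Hg r n i * PO l
      unfold PO
      rw [Finset.sum_mul, Finset.mul_sum]
      rw [Finset.sum_nbij' (fun mu => mu ∘ Hswap i) (fun mu => mu ∘ Hswap i)]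
      · intro a ha
        simp only [Finset.mem_filter, Finset.mem_univ, true_and] at ha ⊢
        exact sameOrbit_trans ha (sameOrbit_swap _ i)
      · intro a ha
        simp only [Finset.mem_filter, Finset.mem_univ, true_and] at ha ⊢
        exact sameOrbit_trans ha (sameOrbit_swap _ i)
      · intro a _; exact comp_swap_swap a i
      · intro a _; exact comp_swap_swap a i
      · intro a _
        rw [He_mul_g]
  | e mu =>
      show PO l * He r n mu = He r n mu * PO l
      rw [PO_mul_He, He_mul_PO_ite]
  | x =>
      unfold PO
      rw [Finset.sum_mul, Finset.mul_sum]
      exact Finset.sum_congr rfl fun b _ => (x_mul_He b).symm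
  | xinv =>
      unfold PO
      rw [Finset.sum_mul, Finset.mul_sum]
      exact Finset.sum_congr rfl fun b _ => (xinv_mul_He b).symm

theorem PO_comm (l : Fin n → Fin r) (h : HhatYH r n) : PO l * h = h * PO l := by
  obtain ⟨a, rfl⟩ := RingQuot.mkAlgHom_surjective LA (HhatRel r n) h
  induction a using FreeAlgebra.induction with
  | grade0 a => rw [AlgHom.commutes]; exact (Algebra.commutes a (PO l)).symm
  | grade1 z => exact PO_comm_gen l z
  | mul a b ha hb => rw [map_mul, ← mul_assoc, ha, mul_assoc, hb, mul_assoc]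
  | add a b ha hb => rw [map_add, mul_add, add_mul, ha, hb]

theorem He_mul_mid_He {l1 l2 : Fin n → Fin r} (h : ¬ sameOrbit l1 l2) (x : HhatYH r n) :
    He r n l1 * x * He r n l2 = 0 := by
  have h1 : He r n l1 = He r n l1 * PO l1 := (He_mul_PO (sameOrbit_refl l1)).symm
  rw [h1, mul_assoc (He r n l1), PO_comm, mul_assoc, mul_assoc, PO_mul_He, if_neg h,
    mul_zero, mul_zero]

end Stmt13
namespace Stmt13

theorem assoc3 {M : Type*} [Monoid M] {a b c d : M} (h : a * b * c = d) (x : M) :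
    a * (b * (c * x)) = d * x := by rw [← h]; simp only [mul_assoc]

theorem assoc3' {M : Type*} [Monoid M] {a b c d : M} (h : a * b * c = d) :
    a * (b * c) = d := by rw [← h, mul_assoc]

theorem assoc4 {M : Type*} [Monoid M] {a b c d e : M} (h : a * b * c * d = e) (x : M) :
    a * (b * (c * (d * x))) = e * x := by rw [← h]; simp only [mul_assoc]

theorem assoc4' {M : Type*} [Monoid M] {a b c d e : M} (h : a * b * c * d = e) :
    a * (b * (c * d)) = e := by rw [← h]; simp only [mul_assoc]

theorem assoc3z {M : Type*} [MonoidWithZero M] {a b c : M} (h : a * b * c = 0) (x : M) :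
    a * (b * (c * x)) = 0 := by rw [assoc3 h, zero_mul]

variable {r n : ℕ} {chains : (Fin n → Fin r) → List (Fin (n - 1))}
  {dom : (Fin n → Fin r) → (Fin n → Fin r)}

theorem TE (lam mu : Fin n → Fin r) :
    tauP r n chains lam * He r n mu
      = He r n (applyChain (chains lam) mu) * tauP r n chains lam := pG_mul_He _ _

theorem ET' (lam mu : Fin n → Fin r) :
    He r n mu * tauP' r n chains lam
      = tauP' r n chains lam * He r n (applyChain (chains lam) mu) := He_mul_pG' _ _

section
variable (hchain : ∀ lam, applyChain (chains lam) lam = dom lam)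
  (hgood : ∀ lam, goodChain (chains lam) lam)

set_option linter.unusedSectionVars false
include hchain hgood

theorem TE0 (lam : Fin n → Fin r) :
    tauP r n chains lam * He r n lam = He r n (dom lam) * tauP r n chains lam := by
  rw [TE, hchain]

theorem ET'0 (lam : Fin n → Fin r) :
    He r n lam * tauP' r n chains lam = tauP' r n chains lam * He r n (dom lam) := by
  rw [ET', hchain]

theorem F1 (lam : Fin n → Fin r) :
    He r n lam * tauP' r n chains lam * tauP r n chains lam = He r n lam :=
  He_pG'_pG (hgood lam)

theorem F2 (lam : Fin n → Fin r) :
    He r n (dom lam) * tauP r n chains lam * tauP' r n chains lam = He r n (dom lam) := by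
  have := He0_pG_pG' (hgood lam)
  rwa [hchain] at this

theorem F1' (lam : Fin n → Fin r) :
    tauP' r n chains lam * tauP r n chains lam * He r n lam = He r n lam := by
  rw [mul_assoc, TE0 hchain hgood, ← mul_assoc, ← ET'0 hchain hgood]
  exact F1 hchain hgood lam

theorem F2' (lam : Fin n → Fin r) :
    tauP r n chains lam * tauP' r n chains lam * He r n (dom lam) = He r n (dom lam) := by
  rw [mul_assoc, ← ET'0 hchain hgood, ← mul_assoc, TE0 hchain hgood]
  exact F2 hchain hgood lam

/-- `1_λ τ'_λ τ_λ 1_λ = 1_λ`. -/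
theorem coreMid (lam : Fin n → Fin r) :
    He r n lam * tauP' r n chains lam * tauP r n chains lam * He r n lam = He r n lam := by
  rw [F1 hchain hgood, He_mul_He, if_pos rfl]

/-- `τ'_λ 1_{λ⁰} τ_λ 1_λ = 1_λ`. -/
theorem coreL (lam : Fin n → Fin r) :
    tauP' r n chains lam * He r n (dom lam) * tauP r n chains lam * He r n lam
      = He r n lam := by
  rw [mul_assoc (tauP' r n chains lam), ← TE0 hchain hgood,
    ← mul_assoc (tauP' r n chains lam),
    mul_assoc (tauP' r n chains lam * tauP r n chains lam), He_mul_He, if_pos rfl]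
  exact F1' hchain hgood lam

/-- `1_λ τ'_λ 1_{λ⁰} τ_λ = 1_λ`. -/
theorem coreR (lam : Fin n → Fin r) :
    He r n lam * tauP' r n chains lam * He r n (dom lam) * tauP r n chains lam
      = He r n lam := by
  rw [ET'0 hchain hgood, mul_assoc (tauP' r n chains lam), He_mul_He, if_pos rfl,
    mul_assoc (tauP' r n chains lam), ← TE0 hchain hgood, ← mul_assoc]
  exact F1' hchain hgood lam

/-- `τ_λ 1_λ τ'_λ 1_{λ⁰} = 1_{λ⁰}`. -/
theorem coreL2 (lam : Fin n → Fin r) :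
    tauP r n chains lam * He r n lam * tauP' r n chains lam * He r n (dom lam)
      = He r n (dom lam) := by
  rw [TE0 hchain hgood, F2 hchain hgood, He_mul_He, if_pos rfl]

/-- `1_{λ⁰} τ_λ 1_λ τ'_λ = 1_{λ⁰}`. -/
theorem coreR2 (lam : Fin n → Fin r) :
    He r n (dom lam) * tauP r n chains lam * He r n lam * tauP' r n chains lam
      = He r n (dom lam) := by
  rw [mul_assoc (He r n (dom lam)), TE0 hchain hgood, ← mul_assoc, He_mul_He, if_pos rfl]
  exact F2 hchain hgood lam

/-- `1_{λ⁰} τ_λ 1_λ = τ_λ 1_λ`. -/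
theorem coreP1 (lam : Fin n → Fin r) :
    He r n (dom lam) * tauP r n chains lam * He r n lam
      = tauP r n chains lam * He r n lam := by
  rw [mul_assoc, TE0 hchain hgood, ← mul_assoc, He_mul_He, if_pos rfl, ← TE0 hchain hgood]

/-- `1_λ τ'_λ 1_{λ⁰} = 1_λ τ'_λ`. -/
theorem coreP2 (lam : Fin n → Fin r) :
    He r n lam * tauP' r n chains lam * He r n (dom lam)
      = He r n lam * tauP' r n chains lam := by
  rw [ET'0 hchain hgood, mul_assoc, He_mul_He, if_pos rfl, ← ET'0 hchain hgood]

/-- `τ_λ 1_λ τ'_λ = 1_{λ⁰}`. -/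
theorem core3 (lam : Fin n → Fin r) :
    tauP r n chains lam * He r n lam * tauP' r n chains lam = He r n (dom lam) := by
  rw [TE0 hchain hgood]
  exact F2 hchain hgood lam

/-- left vanishing: `1_{l1} τ'_{m1} 1_{m1⁰} = 0` if `l1 ≠ m1`. -/
theorem vanL {l1 m1 : Fin n → Fin r} (h : l1 ≠ m1) :
    He r n l1 * tauP' r n chains m1 * He r n (dom m1) = 0 := by
  rw [ET', mul_assoc, He_mul_He, if_neg, mul_zero]
  intro he
  exact h (applyChain_inj (chains m1) (he.trans (hchain m1).symm))

/-- right vanishing: `1_{m2⁰} τ_{m2} 1_{l2} = 0` if `l2 ≠ m2`. -/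
theorem vanR {l2 m2 : Fin n → Fin r} (h : l2 ≠ m2) :
    He r n (dom m2) * tauP r n chains m2 * He r n l2 = 0 := by
  rw [mul_assoc, TE, ← mul_assoc, He_mul_He, if_neg, zero_mul]
  intro he
  exact h (applyChain_inj (chains m2) ((he.symm).trans (hchain m2).symm))

end
end Stmt13
open Stmt13

theorem stmt_13 (r n : ℕ) (hr : 1 ≤ r) (hn : 1 ≤ n)
    (dom : (Fin n → Fin r) → (Fin n → Fin r))
    (hdom_mono : ∀ lam, Monotone (dom lam))
    (hdom_orbit : ∀ l1 l2, sameOrbit l1 l2 → dom l1 = dom l2)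
    (chains : (Fin n → Fin r) → List (Fin (n - 1)))
    (hchain : ∀ lam, applyChain (chains lam) lam = dom lam)
    (hstep : ∀ lam, ∀ j < (chains lam).length,
      applyChain ((chains lam).drop j) lam ≠ applyChain ((chains lam).drop (j + 1)) lam) :
    -- `Ψ` takes values in `Ê_{r,n}`:
    (∀ (h : HhatYH r n) (l1 l2 : Fin n → Fin r),
      (sameOrbit l1 l2 →
        He r n (dom l1) * ΨM r n chains h l1 l2 * He r n (dom l2) = ΨM r n chains h l1 l2) ∧
      (¬ sameOrbit l1 l2 → ΨM r n chains h l1 l2 = 0)) ∧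
    -- `Ψ` is `𝒜`-linear and unital:
    (∀ (a : LA) (h h' : HhatYH r n) (l1 l2 : Fin n → Fin r),
      ΨM r n chains (a • h + h') l1 l2 =
        a • ΨM r n chains h l1 l2 + ΨM r n chains h' l1 l2) ∧
    (∀ l1 l2 : Fin n → Fin r,
      ΨM r n chains 1 l1 l2 = if l1 = l2 then He r n (dom l1) else 0) ∧
    -- `Ψ` intertwines multiplication with the matrix-style product of `Ê_{r,n}`:
    (∀ (h h' : HhatYH r n) (l1 l2 : Fin n → Fin r),
      ΨM r n chains (h * h') l1 l2 =
        ∑ lt ∈ Finset.univ.filter (fun lt => sameOrbit l1 lt),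
          ΨM r n chains h l1 lt * ΨM r n chains h' lt l2) ∧
    -- `Φ` is a two-sided inverse of `Ψ`:
    (∀ h : HhatYH r n, ΦM r n chains dom (ΨM r n chains h) = h) ∧
    (∀ x : (Fin n → Fin r) → (Fin n → Fin r) → HhatYH r n,
      (∀ l1 l2, (sameOrbit l1 l2 → He r n (dom l1) * x l1 l2 * He r n (dom l2) = x l1 l2) ∧
        (¬ sameOrbit l1 l2 → x l1 l2 = 0)) →
      ∀ l1 l2, ΨM r n chains (ΦM r n chains dom x) l1 l2 = x l1 l2) := by
  have hgood : ∀ lam, goodChain (chains lam) lam := hstep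
  refine ⟨?_, ?_, ?_, ?_, ?_, ?_⟩
  -- Part 1: Ψ takes values in Ê
  · intro h l1 l2
    constructor
    · intro hs
      unfold ΨM
      rw [if_pos hs]
      simp only [mul_assoc]
      rw [assoc3' (coreP2 hchain hgood l2), assoc3 (coreP1 hchain hgood l1)]
      simp only [mul_assoc]
    · intro hs
      unfold ΨM
      rw [if_neg hs]
  -- Part 2: linearity
  · intro a h h' l1 l2
    unfold ΨM
    split_ifs with hs
    · simp only [mul_add, add_mul, mul_smul_comm, smul_mul_assoc]
    · simp
  -- Part 3: unitality
  · intro l1 l2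
    unfold ΨM
    by_cases heq : l1 = l2
    · subst heq
      rw [if_pos (sameOrbit_refl l1), if_pos rfl, mul_one,
        mul_assoc (tauP r n chains l1), He_mul_He, if_pos rfl]
      exact core3 hchain hgood l1
    · rw [if_neg heq]
      by_cases hs : sameOrbit l1 l2
      · rw [if_pos hs, mul_one, mul_assoc (tauP r n chains l1), He_mul_He, if_neg heq,
          mul_zero, zero_mul]
      · rw [if_neg hs]
  -- Part 4: multiplicativity
  · intro h h' l1 l2
    by_cases horb : sameOrbit l1 l2
    · have hmid : ∀ (lt : Fin n → Fin r) (y : HhatYH r n),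
          He r n lt * (tauP' r n chains lt * (tauP r n chains lt * (He r n lt * y)))
            = He r n lt * y := fun lt y => assoc4 (coreMid hchain hgood lt) y
      have hsum : ∀ lt ∈ Finset.univ.filter (fun lt => sameOrbit l1 lt),
          ΨM r n chains h l1 lt * ΨM r n chains h' lt l2
            = tauP r n chains l1 * (He r n l1 * (h * (He r n lt
                * (h' * (He r n l2 * tauP' r n chains l2))))) := by
        intro lt hlt
        have h1 : sameOrbit l1 lt := (Finset.mem_filter.1 hlt).2
        have h2 : sameOrbit lt l2 := sameOrbit_trans (sameOrbit_symm h1) horb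
        unfold ΨM
        rw [if_pos h1, if_pos h2]
        simp only [mul_assoc]
        rw [hmid]
      rw [Finset.sum_congr rfl hsum]
      unfold ΨM
      rw [if_pos horb]
      have hPO : PO l1 * (h' * (He r n l2 * tauP' r n chains l2))
          = h' * (He r n l2 * tauP' r n chains l2) := by
        calc PO l1 * (h' * (He r n l2 * tauP' r n chains l2))
            = (PO l1 * h') * (He r n l2 * tauP' r n chains l2) := (mul_assoc _ _ _).symm
          _ = (h' * PO l1) * (He r n l2 * tauP' r n chains l2) := by rw [PO_comm]
          _ = h' * (PO l1 * He r n l2 * tauP' r n chains l2) := by simp only [mul_assoc]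
          _ = h' * (He r n l2 * tauP' r n chains l2) := by rw [PO_mul_He, if_pos horb]
      calc tauP r n chains l1 * He r n l1 * (h * h') * He r n l2 * tauP' r n chains l2
          = tauP r n chains l1 * (He r n l1 * (h * (h'
              * (He r n l2 * tauP' r n chains l2)))) := by simp only [mul_assoc]
        _ = tauP r n chains l1 * (He r n l1 * (h * (PO l1 * (h'
              * (He r n l2 * tauP' r n chains l2))))) := by rw [hPO]
        _ = ∑ lt ∈ Finset.univ.filter (fun lt => sameOrbit l1 lt),
              tauP r n chains l1 * (He r n l1 * (h * (He r n lt
                * (h' * (He r n l2 * tauP' r n chains l2))))) := by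
            unfold PO
            rw [Finset.sum_mul]
            simp only [Finset.mul_sum]
    · unfold ΨM
      rw [if_neg horb]
      symm
      apply Finset.sum_eq_zero
      intro lt hlt
      have h1 : sameOrbit l1 lt := (Finset.mem_filter.1 hlt).2
      have h2 : ¬ sameOrbit lt l2 := fun hc => horb (sameOrbit_trans h1 hc)
      rw [if_neg h2, mul_zero]
  -- Part 5: Φ ∘ Ψ = id
  · intro h
    unfold ΦM
    have hterm : ∀ l1 ∈ (Finset.univ : Finset (Fin n → Fin r)),
        ∀ l2 ∈ (Finset.univ : Finset (Fin n → Fin r)),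
        (if sameOrbit l1 l2 then
          tauP' r n chains l1 * He r n (dom l1) * ΨM r n chains h l1 l2
            * He r n (dom l2) * tauP r n chains l2
        else 0) = He r n l1 * (h * He r n l2) := by
      intro l1 _ l2 _
      by_cases hs : sameOrbit l1 l2
      · rw [if_pos hs]
        unfold ΨM
        rw [if_pos hs]
        simp only [mul_assoc]
        rw [assoc4' (coreR hchain hgood l2), assoc4 (coreL hchain hgood l1)]
      · rw [if_neg hs, ← mul_assoc]
        exact (He_mul_mid_He hs h).symm
    rw [Finset.sum_congr rfl (fun l1 h1 => Finset.sum_congr rfl (hterm l1 h1))]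
    calc (∑ l1 : Fin n → Fin r, ∑ l2 : Fin n → Fin r, He r n l1 * (h * He r n l2))
        = ∑ l1 : Fin n → Fin r, He r n l1 * (h * 1) := by
          refine Finset.sum_congr rfl fun l1 _ => ?_
          rw [← Finset.mul_sum, ← Finset.mul_sum, sum_He]
      _ = h := by
          simp only [mul_one]
          rw [← Finset.sum_mul, sum_He, one_mul]
  -- Part 6: Ψ ∘ Φ = id on Ê
  · intro x hx l1 l2
    by_cases horb : sameOrbit l1 l2
    · have key : ∀ m1 m2 : Fin n → Fin r,
          tauP r n chains l1 * He r n l1 *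
            (if sameOrbit m1 m2 then
              tauP' r n chains m1 * He r n (dom m1) * x m1 m2
                * He r n (dom m2) * tauP r n chains m2
            else 0) * He r n l2 * tauP' r n chains l2
            = if m1 = l1 then if m2 = l2 then x l1 l2 else 0 else 0 := by
        intro m1 m2
        by_cases hsm : sameOrbit m1 m2
        · rw [if_pos hsm]
          by_cases hm1 : m1 = l1
          · subst hm1
            by_cases hm2 : m2 = l2
            · subst hm2
              rw [if_pos rfl, if_pos rfl]
              simp only [mul_assoc]
              rw [assoc4' (coreR2 hchain hgood m2), assoc4 (coreL2 hchain hgood m1),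
                ← mul_assoc]
              exact (hx m1 m2).1 hsm
            · rw [if_pos rfl, if_neg hm2]
              simp only [mul_assoc]
              rw [assoc3z (vanR hchain hgood (fun e => hm2 e.symm))]
              simp only [mul_zero]
          · rw [if_neg hm1]
            simp only [mul_assoc]
            rw [assoc3z (vanL hchain hgood (fun e => hm1 e.symm))]
            simp only [mul_zero]
        · rw [if_neg hsm]
          by_cases hm1 : m1 = l1
          · subst hm1
            by_cases hm2 : m2 = l2
            · subst hm2; exact absurd horb hsm
            · rw [if_pos rfl, if_neg hm2, mul_zero, zero_mul, zero_mul]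
          · rw [if_neg hm1, mul_zero, zero_mul, zero_mul]
      unfold ΨM
      rw [if_pos horb]
      unfold ΦM
      simp only [Finset.mul_sum, Finset.sum_mul]
      rw [Finset.sum_congr rfl (fun m1 _ => Finset.sum_congr rfl (fun m2 _ => key m1 m2))]
      have inner : ∀ m1 : Fin n → Fin r,
          (∑ m2 : Fin n → Fin r, if m1 = l1 then if m2 = l2 then x l1 l2 else 0 else 0)
            = if m1 = l1 then x l1 l2 else 0 := by
        intro m1
        by_cases hm1 : m1 = l1
        · simp only [if_pos hm1]
          rw [Finset.sum_ite_eq' Finset.univ l2 fun _ => x l1 l2]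
          simp
        · simp only [if_neg hm1, Finset.sum_const_zero]
      rw [Finset.sum_congr rfl fun m1 _ => inner m1,
        Finset.sum_ite_eq' Finset.univ l1 fun _ => x l1 l2]
      simp
    · unfold ΨM
      rw [if_neg horb]
      exact ((hx l1 l2).2 horb).symm
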